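/- arXiv:1410.8654 — 4 statements merged into one kernel-verified Lean document; each statement's English description precedes it below -/
import Mathlib

section
/- Let I ⊆ ℝ be an open interval, ε ∈ {−1, 1}, and λ, c ∈ ℝ. Let φ : I → ℝ be three times differentiable with φ(t) ≠ 0 for all t ∈ I, and let f : I → ℝ be twice differentiable. Assume that for all t ∈ I: (1) f''(t) = ελ + 3 φ''(t)/φ(t), and (2) φ(t) φ'(t) f'(t) = ελ φ(t)² − 2εc + φ(t) φ''(t) + 2 φ'(t)². Then for all t ∈ I the warping function φ satisfies the third-order ODE: −2 φ'(t)⁴ + 2cε (φ'(t)² + φ(t) φ''(t)) − φ(t) φ'(t)² φ''(t) − ελ φ(t)³ φ''(t) − (φ(t) φ''(t))² + φ(t)² φ'(t) φ'''(t) = 0. -/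
/-!
Differentiating the second soliton equation `φ φ' f' = ελφ² − 2εc + φφ'' + 2φ'²` produces a
relation involving `f'` and `f''`. The first equation expresses `φ f''` through `φ` alone, and
the second equation itself, multiplied by `φ'² + φφ''`, eliminates `f'`.
-/

open Filter Topology

theorem deriv_soliton_second_eq {φ f : ℝ → ℝ} {t ε lam c : ℝ}
    (hφ1 : DifferentiableAt ℝ φ t) (hφ2 : DifferentiableAt ℝ (deriv φ) t)
    (hφ3 : DifferentiableAt ℝ (deriv (deriv φ)) t) (hf2 : DifferentiableAt ℝ (deriv f) t)
    (heq : ∀ᶠ s in 𝓝 t, φ s * deriv φ s * deriv f s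
      = ε * lam * (φ s) ^ 2 - 2 * ε * c + φ s * deriv (deriv φ) s + 2 * (deriv φ s) ^ 2) :
    ((deriv φ t) ^ 2 + φ t * deriv (deriv φ) t) * deriv f t
        + φ t * deriv φ t * deriv (deriv f) t
      = 2 * ε * lam * φ t * deriv φ t + 5 * deriv φ t * deriv (deriv φ) t
        + φ t * deriv (deriv (deriv φ)) t := by
  have h1 := hφ1.hasDerivAt
  have h2 := hφ2.hasDerivAt
  have h3 := hφ3.hasDerivAt
  have hlhs := (h1.mul h2).mul hf2.hasDerivAt
  have hrhs := ((((h1.pow 2).const_mul (ε * lam)).sub_const (2 * ε * c)).add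
    (h1.mul h3)).add ((h2.pow 2).const_mul 2)
  have hderiv := (hrhs.congr_of_eventuallyEq heq).unique hlhs
  norm_num only [Pi.mul_apply] at hderiv
  linear_combination -hderiv

theorem warped_ode_of_soliton_relations {ε lam c p p1 p2 p3 f1 f2 : ℝ} (hp : p ≠ 0)
    (heq1 : f2 = ε * lam + 3 * p2 / p)
    (heq2 : p * p1 * f1 = ε * lam * p ^ 2 - 2 * ε * c + p * p2 + 2 * p1 ^ 2)
    (heq2' : (p1 ^ 2 + p * p2) * f1 + p * p1 * f2
      = 2 * ε * lam * p * p1 + 5 * p1 * p2 + p * p3) :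
    -2 * p1 ^ 4 + 2 * c * ε * (p1 ^ 2 + p * p2) - p * p1 ^ 2 * p2 - ε * lam * p ^ 3 * p2
      - (p * p2) ^ 2 + p ^ 2 * p1 * p3 = 0 := by
  have hf2 : f2 * p = ε * lam * p + 3 * p2 := by
    rw [heq1]
    field_simp
  linear_combination (p1 ^ 2 + p * p2) * heq2 + p * p1 ^ 2 * hf2 - p * p1 * heq2'

theorem stmt0_general (I : Set ℝ) (hIopen : IsOpen I)
    (ε lam c : ℝ)
    (φ f : ℝ → ℝ)
    (hφ1 : ∀ t ∈ I, DifferentiableAt ℝ φ t)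
    (hφ2 : ∀ t ∈ I, DifferentiableAt ℝ (deriv φ) t)
    (hφ3 : ∀ t ∈ I, DifferentiableAt ℝ (deriv (deriv φ)) t)
    (hφ0 : ∀ t ∈ I, φ t ≠ 0)
    (hf2 : ∀ t ∈ I, DifferentiableAt ℝ (deriv f) t)
    (heq1 : ∀ t ∈ I, deriv (deriv f) t = ε * lam + 3 * deriv (deriv φ) t / φ t)
    (heq2 : ∀ t ∈ I, φ t * deriv φ t * deriv f t
      = ε * lam * (φ t) ^ 2 - 2 * ε * c + φ t * deriv (deriv φ) t + 2 * (deriv φ t) ^ 2) :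
    ∀ t ∈ I,
      -2 * (deriv φ t) ^ 4
        + 2 * c * ε * ((deriv φ t) ^ 2 + φ t * deriv (deriv φ) t)
        - φ t * (deriv φ t) ^ 2 * deriv (deriv φ) t
        - ε * lam * (φ t) ^ 3 * deriv (deriv φ) t
        - (φ t * deriv (deriv φ) t) ^ 2
        + (φ t) ^ 2 * deriv φ t * deriv (deriv (deriv φ)) t = 0 := by
  intro t ht
  have heq2_near : ∀ᶠ s in 𝓝 t, φ s * deriv φ s * deriv f s
      = ε * lam * (φ s) ^ 2 - 2 * ε * c + φ s * deriv (deriv φ) s + 2 * (deriv φ s) ^ 2 :=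
    eventually_of_mem (hIopen.mem_nhds ht) heq2
  exact warped_ode_of_soliton_relations (hφ0 t ht) (heq1 t ht) (heq2 t ht)
    (deriv_soliton_second_eq (hφ1 t ht) (hφ2 t ht) (hφ3 t ht) (hf2 t ht) heq2_near)

/-- On an open interval `I ⊆ ℝ`, if `φ` (three times differentiable,
nowhere zero on `I`) and `f` (twice differentiable) satisfy the gradient Ricci soliton
equations of a warped product `I ×_φ N(c)`, namely
`f'' = ελ + 3 φ''/φ` and `φ φ' f' = ελ φ² − 2εc + φ φ'' + 2 φ'²`,
then `φ` satisfies the third-order ODE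
`−2 φ'⁴ + 2cε(φ'² + φ φ'') − φ φ'² φ'' − ελ φ³ φ'' − (φ φ'')² + φ² φ' φ''' = 0` on `I`. -/
theorem stmt0 (I : Set ℝ) (hIopen : IsOpen I) (hIconn : I.OrdConnected)
    (ε lam c : ℝ) (hε : ε = 1 ∨ ε = -1)
    (φ f : ℝ → ℝ)
    (hφ1 : ∀ t ∈ I, DifferentiableAt ℝ φ t)
    (hφ2 : ∀ t ∈ I, DifferentiableAt ℝ (deriv φ) t)
    (hφ3 : ∀ t ∈ I, DifferentiableAt ℝ (deriv (deriv φ)) t)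
    (hφ0 : ∀ t ∈ I, φ t ≠ 0)
    (hf1 : ∀ t ∈ I, DifferentiableAt ℝ f t)
    (hf2 : ∀ t ∈ I, DifferentiableAt ℝ (deriv f) t)
    (heq1 : ∀ t ∈ I, deriv (deriv f) t = ε * lam + 3 * deriv (deriv φ) t / φ t)
    (heq2 : ∀ t ∈ I, φ t * deriv φ t * deriv f t
      = ε * lam * (φ t) ^ 2 - 2 * ε * c + φ t * deriv (deriv φ) t + 2 * (deriv φ t) ^ 2) :
    ∀ t ∈ I,
      -2 * (deriv φ t) ^ 4
        + 2 * c * ε * ((deriv φ t) ^ 2 + φ t * deriv (deriv φ) t)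
        - φ t * (deriv φ t) ^ 2 * deriv (deriv φ) t
        - ε * lam * (φ t) ^ 3 * deriv (deriv φ) t
        - (φ t * deriv (deriv φ) t) ^ 2
        + (φ t) ^ 2 * deriv φ t * deriv (deriv (deriv φ)) t = 0 :=
  stmt0_general I hIopen ε lam c φ f hφ1 hφ2 hφ3 hφ0 hf2 heq1 heq2
end

section
/- The coefficients 𝚪 defined by 𝚪^k_{ij} = Γ^k_{ij}, 𝚪^{k'}_{i'j} = 𝚪^{k'}_{j i'} = −Γ^i_{jk}, 𝚪^{k'}_{ij} = Σ_r x_{r'}(∂_{x^k}Γ^r_{ij} − ∂_{x^i}Γ^r_{jk} − ∂_{x^j}Γ^r_{ik} + 2 Σ_l Γ^r_{kl}Γ^l_{ij}) + ½(∂_{x^i}Φ_{jk} + ∂_{x^j}Φ_{ik} − ∂_{x^k}Φ_{ij}) − Σ_l Φ_{kl}Γ^l_{ij} (i,j,k ∈ {1,2}), with all other coefficients zero, are symmetric in their lower indices and satisfy the Levi-Civita compatibility equations ∂_a g_{bc} = Σ_d (𝚪^d_{ab} g_{dc} + 𝚪^d_{ac} g_{db}) for all indices a, b, c ∈ {1,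 2, 1', 2'}; hence they are the Christoffel symbols of the Levi-Civita connection of the deformed Riemannian extension g_{D,Φ}. -/
noncomputable section

/-- Points of the affine surface `Σ` (local coordinates `(x¹,x²)`). -/
abbrev Pt2 := Fin 2 → ℝ
/-- Points of the cotangent bundle `T*Σ` (coordinates `(x¹,x²,x₁',x₂')`). -/
abbrev Pt4 := Fin 4 → ℝ

/-- Projection to the base coordinates. -/
def base (p : Pt4) : Pt2 := ![p 0, p 1]

/-- Unprimed index `i ∈ {1,2}` as an index in `{1,2,1',2'}`. -/
def unp (i : Fin 2) : Fin 4 := ⟨i.1, by omega⟩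
/-- Primed index `i' ∈ {1',2'}` as an index in `{1,2,1',2'}`. -/
def pr (i : Fin 2) : Fin 4 := ⟨i.1 + 2, by omega⟩

/-- Partial derivative `∂_{x^i}` on the surface. -/
def pd2 (i : Fin 2) (f : Pt2 → ℝ) (p : Pt2) : ℝ :=
  fderiv ℝ f p (Pi.single i 1)

/-- Partial derivative `∂_a` on the cotangent bundle. -/
def pd4 (a : Fin 4) (f : Pt4 → ℝ) (p : Pt4) : ℝ :=
  fderiv ℝ f p (Pi.single a 1)

/-- The component `𝚪^{k'}_{ij}` of the Levi-Civita connection of a deformed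
Riemannian extension. -/
def GammaPr (Γ : Fin 2 → Fin 2 → Fin 2 → Pt2 → ℝ) (Φ : Fin 2 → Fin 2 → Pt2 → ℝ)
    (k i j : Fin 2) (p : Pt4) : ℝ :=
  (∑ r : Fin 2, p (pr r) *
      (pd2 k (Γ r i j) (base p) - pd2 i (Γ r j k) (base p) - pd2 j (Γ r i k) (base p)
        + 2 * ∑ l : Fin 2, Γ r k l (base p) * Γ l i j (base p)))
    + (1 / 2) * (pd2 i (Φ j k) (base p) + pd2 j (Φ i k) (base p) - pd2 k (Φ i j) (base p))
    - ∑ l : Fin 2, Φ k l (base p) * Γ l i j (base p)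

/-- The Christoffel symbols `𝚪^a_{bc}` of the Levi-Civita connection of the deformed
Riemannian extension `g_{D,Φ}`:  `𝚪^k_{ij} = Γ^k_{ij}`, `𝚪^{k'}_{i'j} = 𝚪^{k'}_{j i'} = −Γ^i_{jk}`,
`𝚪^{k'}_{ij} = GammaPr`, and all other coefficients zero. -/
def GG (Γ : Fin 2 → Fin 2 → Fin 2 → Pt2 → ℝ) (Φ : Fin 2 → Fin 2 → Pt2 → ℝ)
    (a b c : Fin 4) (p : Pt4) : ℝ :=
  if ha : a.1 < 2 then
    if hb : b.1 < 2 then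
      if hc : c.1 < 2 then Γ ⟨a.1, ha⟩ ⟨b.1, hb⟩ ⟨c.1, hc⟩ (base p) else 0
    else 0
  else
    if hb : b.1 < 2 then
      if hc : c.1 < 2 then GammaPr Γ Φ ⟨a.1 - 2, by omega⟩ ⟨b.1, hb⟩ ⟨c.1, hc⟩ p
      else -Γ ⟨c.1 - 2, by omega⟩ ⟨b.1, hb⟩ ⟨a.1 - 2, by omega⟩ (base p)
    else
      if hc : c.1 < 2 then -Γ ⟨b.1 - 2, by omega⟩ ⟨c.1, hc⟩ ⟨a.1 - 2, by omega⟩ (base p)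
      else 0

/-- The deformed Riemannian extension metric `g_{D,Φ}`:
`g_{ij} = Φ_{ij} − 2(x₁' Γ¹_{ij} + x₂' Γ²_{ij})`, `g_{i j'} = g_{j' i} = δ_i^j`, `g_{i'j'} = 0`. -/
def gDE (Γ : Fin 2 → Fin 2 → Fin 2 → Pt2 → ℝ) (Φ : Fin 2 → Fin 2 → Pt2 → ℝ)
    (a b : Fin 4) (p : Pt4) : ℝ :=
  if ha : a.1 < 2 then
    if hb : b.1 < 2 then
      Φ ⟨a.1, ha⟩ ⟨b.1, hb⟩ (base p)
        - 2 * ∑ r : Fin 2, p (pr r) * Γ r ⟨a.1, ha⟩ ⟨b.1, hb⟩ (base p)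
    else if b.1 = a.1 + 2 then 1 else 0
  else
    if b.1 < 2 then (if a.1 = b.1 + 2 then 1 else 0) else 0

/-- The Ricci tensor `ρ_{ab}` of `g_{D,Φ}`, computed from its Christoffel symbols. -/
def ricci4 (Γ : Fin 2 → Fin 2 → Fin 2 → Pt2 → ℝ) (Φ : Fin 2 → Fin 2 → Pt2 → ℝ)
    (a b : Fin 4) (p : Pt4) : ℝ :=
  (∑ c : Fin 4, pd4 c (GG Γ Φ c a b) p) - pd4 a (fun q => ∑ c : Fin 4, GG Γ Φ c c b q) p
    + ∑ c : Fin 4, ∑ d : Fin 4,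
        (GG Γ Φ c c d p * GG Γ Φ d a b p - GG Γ Φ c a d p * GG Γ Φ d c b p)

/-- The Hessian `Hes_f(∂_a,∂_b) = ∂_a∂_b f − Σ_c 𝚪^c_{ab} ∂_c f` on `T*Σ`. -/
def hess4 (Γ : Fin 2 → Fin 2 → Fin 2 → Pt2 → ℝ) (Φ : Fin 2 → Fin 2 → Pt2 → ℝ)
    (f : Pt4 → ℝ) (a b : Fin 4) (p : Pt4) : ℝ :=
  pd4 a (pd4 b f) p - ∑ c : Fin 4, GG Γ Φ c a b p * pd4 c f p

/-- The Ricci tensor `ρ^D_{ij}` of the affine connection `D` on the surface. -/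
def ricciD (Γ : Fin 2 → Fin 2 → Fin 2 → Pt2 → ℝ) (i j : Fin 2) (p : Pt2) : ℝ :=
  (∑ k : Fin 2, pd2 k (Γ k i j) p) - pd2 i (fun q => ∑ k : Fin 2, Γ k k j q) p
    + ∑ k : Fin 2, ∑ l : Fin 2, (Γ k k l p * Γ l i j p - Γ k i l p * Γ l k j p)

/-- The symmetrized Ricci tensor `ρ^{D,sym}_{ij}` of `D`. -/
def ricciDSym (Γ : Fin 2 → Fin 2 → Fin 2 → Pt2 → ℝ) (i j : Fin 2) (p : Pt2) : ℝ :=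
  (ricciD Γ i j p + ricciD Γ j i p) / 2

/-- The affine Hessian `Hes^D_h(∂_i,∂_j) = ∂_i∂_j h − Σ_k Γ^k_{ij} ∂_k h` on the surface. -/
def hessD (Γ : Fin 2 → Fin 2 → Fin 2 → Pt2 → ℝ) (h : Pt2 → ℝ) (i j : Fin 2) (p : Pt2) : ℝ :=
  pd2 i (pd2 j h) p - ∑ k : Fin 2, Γ k i j p * pd2 k h p


def L4 : Pt4 →L[ℝ] Pt2 := ContinuousLinearMap.pi fun i => ContinuousLinearMap.proj (unp i)

lemma base_eq : base = ⇑L4 := by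
  funext p i
  fin_cases i <;> rfl

lemma L4_single_unp (k : Fin 2) : L4 (Pi.single (unp k) 1) = Pi.single k 1 := by
  funext i
  fin_cases i <;> fin_cases k <;> simp [L4, unp, Pi.single_apply]

lemma L4_single_pr (r : Fin 2) : L4 (Pi.single (pr r) 1) = 0 := by
  funext i
  fin_cases i <;> fin_cases r <;> simp [L4, unp, pr, Pi.single_apply]

lemma fin4_cases (a : Fin 4) : (∃ i : Fin 2, a = unp i) ∨ (∃ i : Fin 2, a = pr i) := by
  by_cases h : a.1 < 2
  · exact Or.inl ⟨⟨a.1, h⟩, by simp [unp]⟩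
  · exact Or.inr ⟨⟨a.1 - 2, by omega⟩, by apply Fin.ext; simp [pr]; omega⟩
section Aux
variable {U : Set Pt2}
  {Γ : Fin 2 → Fin 2 → Fin 2 → Pt2 → ℝ} {Φ : Fin 2 → Fin 2 → Pt2 → ℝ}

lemma gDE_uu (i j : Fin 2) : gDE Γ Φ (unp i) (unp j)
    = fun p => Φ i j (base p)
      - 2 * (p (pr 0) * Γ 0 i j (base p) + p (pr 1) * Γ 1 i j (base p)) := by
  funext p
  simp [gDE, unp, i.isLt, j.isLt, Fin.sum_univ_two]

lemma gDE_up (i j : Fin 2) : gDE Γ Φ (unp i) (pr j)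
    = fun _ => if i = j then (1:ℝ) else 0 := by
  funext p
  have h1 : (unp i).1 < 2 := i.isLt
  have h2 : ¬ ((pr j).1 < 2) := by simp [pr]
  unfold gDE
  rw [dif_pos h1, dif_neg h2]
  by_cases h : i = j
  · subst h; simp [pr, unp]
  · rw [if_neg h, if_neg]
    intro hc
    exact h (Fin.ext (by simp [pr, unp] at hc; omega)).symm

lemma gDE_pu (i j : Fin 2) : gDE Γ Φ (pr i) (unp j)
    = fun _ => if i = j then (1:ℝ) else 0 := by
  funext p
  have h1 : (unp j).1 < 2 := j.isLt
  have h2 : ¬ ((pr i).1 < 2) := by simp [pr]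
  unfold gDE
  rw [dif_neg h2, if_pos h1]
  by_cases h : i = j
  · subst h; simp [pr, unp]
  · rw [if_neg h, if_neg]
    intro hc
    exact h (Fin.ext (by simp [pr, unp] at hc; omega))

lemma gDE_pp (i j : Fin 2) : gDE Γ Φ (pr i) (pr j) = fun _ => (0:ℝ) := by
  funext p
  have h2 : ¬ ((pr i).1 < 2) := by simp [pr]
  have h3 : ¬ ((pr j).1 < 2) := by simp [pr]
  unfold gDE
  rw [dif_neg h2, if_neg h3]

lemma single_unp_pr (k r : Fin 2) : (Pi.single (unp k) 1 : Pt4) (pr r) = 0 := by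
  rw [Pi.single_apply, if_neg]
  intro h; have := congrArg Fin.val h; simp [unp, pr] at this; omega

lemma single_pr_pr (r s : Fin 2) : (Pi.single (pr r) 1 : Pt4) (pr s) = if s = r then 1 else 0 := by
  rw [Pi.single_apply]
  by_cases h : s = r
  · subst h; simp
  · rw [if_neg h, if_neg]
    intro hc; exact h (Fin.ext (by have := congrArg Fin.val hc; simp [pr] at this; omega))

lemma pd4_const (a : Fin 4) (c : ℝ) (p : Pt4) : pd4 a (fun _ => c) p = 0 := by
  simp [pd4]

lemma hasFDerivAt_guu (hU : IsOpen U)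
    (hΓsmooth : ∀ k i j, ContDiffOn ℝ (⊤ : ℕ∞) (Γ k i j) U)
    (hΦsmooth : ∀ i j, ContDiffOn ℝ (⊤ : ℕ∞) (Φ i j) U)
    (i j : Fin 2) (p : Pt4) (hp : base p ∈ U) :
    HasFDerivAt (gDE Γ Φ (unp i) (unp j))
      ((fderiv ℝ (Φ i j) (base p)).comp L4
        - (2:ℝ) • ((p (pr 0) • (fderiv ℝ (Γ 0 i j) (base p)).comp L4
              + Γ 0 i j (base p) • (ContinuousLinearMap.proj (pr 0) : Pt4 →L[ℝ] ℝ))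
            + (p (pr 1) • (fderiv ℝ (Γ 1 i j) (base p)).comp L4
              + Γ 1 i j (base p) • (ContinuousLinearMap.proj (pr 1) : Pt4 →L[ℝ] ℝ)))) p := by
  have hnb : U ∈ nhds (base p) := hU.mem_nhds hp
  have hb : HasFDerivAt base L4 p := by
    rw [base_eq]; exact L4.hasFDerivAt
  have hφ : HasFDerivAt (fun q => Φ i j (base q))
      ((fderiv ℝ (Φ i j) (base p)).comp L4) p :=
    (((hΦsmooth i j).contDiffAt hnb).differentiableAt (by simp)).hasFDerivAt.comp p hb
  have hγ : ∀ r : Fin 2, HasFDerivAt (fun q => Γ r i j (base q))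
      ((fderiv ℝ (Γ r i j) (base p)).comp L4) p := fun r =>
    (((hΓsmooth r i j).contDiffAt hnb).differentiableAt (by simp)).hasFDerivAt.comp p hb
  have hpr : ∀ r : Fin 2, HasFDerivAt (fun q : Pt4 => q (pr r))
      (ContinuousLinearMap.proj (pr r) : Pt4 →L[ℝ] ℝ) p := by
    intro r
    exact (ContinuousLinearMap.proj (pr r) : Pt4 →L[ℝ] ℝ).hasFDerivAt
  rw [gDE_uu]
  exact hφ.sub ((((hpr 0).mul (hγ 0)).add ((hpr 1).mul (hγ 1))).const_mul 2)

lemma pd4_guu_unp (hU : IsOpen U)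
    (hΓsmooth : ∀ k i j, ContDiffOn ℝ (⊤ : ℕ∞) (Γ k i j) U)
    (hΦsmooth : ∀ i j, ContDiffOn ℝ (⊤ : ℕ∞) (Φ i j) U)
    (k i j : Fin 2) (p : Pt4) (hp : base p ∈ U) :
    pd4 (unp k) (gDE Γ Φ (unp i) (unp j)) p
      = pd2 k (Φ i j) (base p)
        - 2 * (p (pr 0) * pd2 k (Γ 0 i j) (base p) + p (pr 1) * pd2 k (Γ 1 i j) (base p)) := by
  unfold pd4
  rw [(hasFDerivAt_guu hU hΓsmooth hΦsmooth i j p hp).fderiv]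
  simp [ContinuousLinearMap.sub_apply, ContinuousLinearMap.comp_apply,
    ContinuousLinearMap.smul_apply, ContinuousLinearMap.add_apply,
    ContinuousLinearMap.proj_apply, L4_single_unp, single_unp_pr, pd2, smul_eq_mul]
  ring

lemma pd4_guu_pr (hU : IsOpen U)
    (hΓsmooth : ∀ k i j, ContDiffOn ℝ (⊤ : ℕ∞) (Γ k i j) U)
    (hΦsmooth : ∀ i j, ContDiffOn ℝ (⊤ : ℕ∞) (Φ i j) U)
    (r i j : Fin 2) (p : Pt4) (hp : base p ∈ U) :
    pd4 (pr r) (gDE Γ Φ (unp i) (unp j)) p = -2 * Γ r i j (base p) := by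
  unfold pd4
  rw [(hasFDerivAt_guu hU hΓsmooth hΦsmooth i j p hp).fderiv]
  fin_cases r <;>
    simp [ContinuousLinearMap.sub_apply, ContinuousLinearMap.comp_apply,
      ContinuousLinearMap.smul_apply, ContinuousLinearMap.add_apply,
      ContinuousLinearMap.proj_apply, L4_single_pr, single_pr_pr, smul_eq_mul] <;> ring

end Aux
section Aux2
variable {Γ : Fin 2 → Fin 2 → Fin 2 → Pt2 → ℝ} {Φ : Fin 2 → Fin 2 → Pt2 → ℝ}

lemma unp_lt (i : Fin 2) : (unp i).1 < 2 := i.isLt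

lemma not_pr_lt (i : Fin 2) : ¬ ((pr i).1 < 2) := by simp [pr]

lemma GG_uuu (k i j : Fin 2) (p : Pt4) :
    GG Γ Φ (unp k) (unp i) (unp j) p = Γ k i j (base p) := by
  unfold GG
  rw [dif_pos (unp_lt k), dif_pos (unp_lt i), dif_pos (unp_lt j)]
  rfl

lemma GG_uup (k i j : Fin 2) (p : Pt4) : GG Γ Φ (unp k) (unp i) (pr j) p = 0 := by
  unfold GG
  rw [dif_pos (unp_lt k), dif_pos (unp_lt i), dif_neg (not_pr_lt j)]

lemma GG_upu (k i j : Fin 2) (p : Pt4) : GG Γ Φ (unp k) (pr i) (unp j) p = 0 := by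
  unfold GG
  rw [dif_pos (unp_lt k), dif_neg (not_pr_lt i)]

lemma GG_upp (k i j : Fin 2) (p : Pt4) : GG Γ Φ (unp k) (pr i) (pr j) p = 0 := by
  unfold GG
  rw [dif_pos (unp_lt k), dif_neg (not_pr_lt i)]

lemma GG_puu (k i j : Fin 2) (p : Pt4) :
    GG Γ Φ (pr k) (unp i) (unp j) p = GammaPr Γ Φ k i j p := by
  unfold GG
  rw [dif_neg (not_pr_lt k), dif_pos (unp_lt i), dif_pos (unp_lt j)]
  rfl

lemma GG_pup (k i j : Fin 2) (p : Pt4) :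
    GG Γ Φ (pr k) (unp i) (pr j) p = -Γ j i k (base p) := by
  unfold GG
  rw [dif_neg (not_pr_lt k), dif_pos (unp_lt i), dif_neg (not_pr_lt j)]
  rfl

lemma GG_ppu (k i j : Fin 2) (p : Pt4) :
    GG Γ Φ (pr k) (pr i) (unp j) p = -Γ i j k (base p) := by
  unfold GG
  rw [dif_neg (not_pr_lt k), dif_neg (not_pr_lt i), dif_pos (unp_lt j)]
  rfl

lemma GG_ppp (k i j : Fin 2) (p : Pt4) : GG Γ Φ (pr k) (pr i) (pr j) p = 0 := by
  unfold GG
  rw [dif_neg (not_pr_lt k), dif_neg (not_pr_lt i), dif_neg (not_pr_lt j)]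

lemma sum4 (f : Fin 4 → ℝ) : ∑ d : Fin 4, f d = f (unp 0) + f (unp 1) + f (pr 0) + f (pr 1) := by
  rw [Fin.sum_univ_four]
  rfl

end Aux2
lemma GammaPr_symm {Γ : Fin 2 → Fin 2 → Fin 2 → Pt2 → ℝ} {Φ : Fin 2 → Fin 2 → Pt2 → ℝ}
    (hΓsym : ∀ k i j, Γ k i j = Γ k j i) (hΦsym : ∀ i j, Φ i j = Φ j i)
    (k i j : Fin 2) (p : Pt4) : GammaPr Γ Φ k i j p = GammaPr Γ Φ k j i p := by
  have hΓpt : ∀ (r a b : Fin 2) (q : Pt2), Γ r a b q = Γ r b a q := fun r a b q => by rw [hΓsym]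
  have hΓd : ∀ (a r b c : Fin 2), pd2 a (Γ r b c) = pd2 a (Γ r c b) := fun a r b c => by rw [hΓsym]
  have hΦd : ∀ (a b c : Fin 2), pd2 a (Φ b c) = pd2 a (Φ c b) := fun a b c => by rw [hΦsym]
  have hΦpt : ∀ (a b : Fin 2) (q : Pt2), Φ a b q = Φ b a q := fun a b q => by rw [hΦsym]
  simp only [GammaPr, Fin.sum_univ_two]
  fin_cases i <;> fin_cases j <;> fin_cases k <;>
    simp only [hΓpt, hΓd, hΦd, hΦpt] <;> ring
set_option maxHeartbeats 1000000 in
/-- The coefficients `𝚪` (see `GG`) are symmetric in their lower indices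
and satisfy the Levi-Civita compatibility equations
`∂_a g_{bc} = Σ_d (𝚪^d_{ab} g_{dc} + 𝚪^d_{ac} g_{db})` for the deformed Riemannian
extension `g_{D,Φ}`; hence they are the Christoffel symbols of its Levi-Civita connection. -/
theorem stmt1 (U : Set Pt2) (hU : IsOpen U)
    (Γ : Fin 2 → Fin 2 → Fin 2 → Pt2 → ℝ)
    (hΓsmooth : ∀ k i j, ContDiffOn ℝ (⊤ : ℕ∞) (Γ k i j) U)
    (hΓsym : ∀ k i j, Γ k i j = Γ k j i)
    (Φ : Fin 2 → Fin 2 → Pt2 → ℝ)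
    (hΦsmooth : ∀ i j, ContDiffOn ℝ (⊤ : ℕ∞) (Φ i j) U)
    (hΦsym : ∀ i j, Φ i j = Φ j i) :
    ∀ p : Pt4, base p ∈ U →
      (∀ a b c : Fin 4, GG Γ Φ a b c p = GG Γ Φ a c b p) ∧
      (∀ a b c : Fin 4,
        pd4 a (gDE Γ Φ b c) p
          = ∑ d : Fin 4, (GG Γ Φ d a b p * gDE Γ Φ d c p + GG Γ Φ d a c p * gDE Γ Φ d b p)) := by
  intro p hp
  have hΓpt : ∀ (r a b : Fin 2) (q : Pt2), Γ r a b q = Γ r b a q := fun r a b q => by rw [hΓsym]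
  have hA : ∀ r : Fin 2, Γ r 1 0 = Γ r 0 1 := fun r => hΓsym r 1 0
  have hB : Φ 1 0 = Φ 0 1 := hΦsym 1 0
  constructor
  · intro a b c
    rcases fin4_cases a with ⟨i, rfl⟩ | ⟨i, rfl⟩ <;>
      rcases fin4_cases b with ⟨j, rfl⟩ | ⟨j, rfl⟩ <;>
        rcases fin4_cases c with ⟨k, rfl⟩ | ⟨k, rfl⟩ <;>
          simp only [GG_uuu, GG_uup, GG_upu, GG_upp, GG_puu, GG_pup, GG_ppu, GG_ppp] <;>
          first
            | rfl
            | exact hΓpt _ _ _ _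
            | exact GammaPr_symm hΓsym hΦsym _ _ _ _
  · intro a b c
    rcases fin4_cases b with ⟨j, rfl⟩ | ⟨j, rfl⟩ <;>
      rcases fin4_cases c with ⟨k, rfl⟩ | ⟨k, rfl⟩
    -- b = unp j, c = unp k
    · rcases fin4_cases a with ⟨i, rfl⟩ | ⟨i, rfl⟩
      · rw [pd4_guu_unp hU hΓsmooth hΦsmooth i j k p hp, sum4]
        simp only [GG_uuu, GG_puu, gDE_uu, gDE_pu, GammaPr, Fin.sum_univ_two]
        fin_cases i <;> fin_cases j <;> fin_cases k <;>
          simp only [Fin.mk_zero, Fin.mk_one, hA, hB] <;> norm_num <;> ring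
      · rw [pd4_guu_pr hU hΓsmooth hΦsmooth i j k p hp, sum4]
        simp only [GG_upu, GG_ppu, gDE_uu, gDE_pu]
        fin_cases i <;> fin_cases j <;> fin_cases k <;>
          simp only [Fin.mk_zero, Fin.mk_one, hA, hB] <;> norm_num <;> ring
    -- b = unp j, c = pr k
    · rw [gDE_up j k, pd4_const, sum4]
      rcases fin4_cases a with ⟨i, rfl⟩ | ⟨i, rfl⟩
      · simp only [GG_uuu, GG_uup, GG_puu, GG_pup, gDE_uu, gDE_up, gDE_pu, gDE_pp]
        fin_cases i <;> fin_cases j <;> fin_cases k <;>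
          simp only [Fin.mk_zero, Fin.mk_one, hA, hB] <;> norm_num <;> ring
      · simp only [GG_upu, GG_upp, GG_ppu, GG_ppp, gDE_uu, gDE_up, gDE_pu, gDE_pp]
        fin_cases i <;> fin_cases j <;> fin_cases k <;>
          simp only [Fin.mk_zero, Fin.mk_one, hA, hB] <;> norm_num <;> ring
    -- b = pr j, c = unp k
    · rw [gDE_pu j k, pd4_const, sum4]
      rcases fin4_cases a with ⟨i, rfl⟩ | ⟨i, rfl⟩
      · simp only [GG_uuu, GG_uup, GG_puu, GG_pup, gDE_uu, gDE_up, gDE_pu, gDE_pp]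
        fin_cases i <;> fin_cases j <;> fin_cases k <;>
          simp only [Fin.mk_zero, Fin.mk_one, hA, hB] <;> norm_num <;> ring
      · simp only [GG_upu, GG_upp, GG_ppu, GG_ppp, gDE_uu, gDE_up, gDE_pu, gDE_pp]
        fin_cases i <;> fin_cases j <;> fin_cases k <;>
          simp only [Fin.mk_zero, Fin.mk_one, hA, hB] <;> norm_num <;> ring
    -- b = pr j, c = pr k
    · rw [gDE_pp j k, pd4_const, sum4]
      rcases fin4_cases a with ⟨i, rfl⟩ | ⟨i, rfl⟩
      · simp only [GG_uuu, GG_uup, GG_puu, GG_pup, gDE_uu, gDE_up, gDE_pu, gDE_pp]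
        fin_cases i <;> fin_cases j <;> fin_cases k <;>
          simp only [Fin.mk_zero, Fin.mk_one, hA, hB] <;> norm_num <;> ring
      · simp only [GG_upu, GG_upp, GG_ppu, GG_ppp, gDE_uu, gDE_up, gDE_pu, gDE_pp]
        fin_cases i <;> fin_cases j <;> fin_cases k <;>
          simp only [Fin.mk_zero, Fin.mk_one, hA, hB] <;> norm_num <;> ring

end
end

section
/- Let γ¹_{11}, γ¹_{12}, γ¹_{22}, γ²_{11}, γ²_{12}, γ²_{22} ∈ ℝ satisfy γ¹_{12} = −γ²_{22}. Then the two equations 2 γ¹_{12} γ²_{12} − 3 γ²_{11} γ¹_{22} + (2 + γ¹_{11}) γ²_{22} = 0 and (γ¹_{12})² − 2 γ¹_{12} γ²_{22} + γ¹_{22} (1 − γ¹_{11} + 2 γ²_{12}) = 0 hold if and only if one of the following holds: (i) γ¹_{12} = 0 and γ¹_{22} = 0; or (ii) γ¹_{22} ≠ 0, γ²_{12} = ½(γ¹_{11} − 1 − 3 (γ¹_{12})² / γ¹_{22}), and γ²_{11} = −(γ¹_{12})³ / (γ¹_{22})² − γ¹_{12} / γ¹_{22}. -/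
/-!
After substituting `γ²₂₂ = -γ¹₁₂`, the second equation reads `3 (γ¹₁₂)² + γ¹₂₂ (1 - γ¹₁₁ + 2 γ²₁₂) = 0`
and is linear in `γ²₁₂` with coefficient `2 γ¹₂₂`, while the first is linear in `γ²₁₁` with
coefficient `-3 γ¹₂₂`. If `γ¹₂₂ = 0` the second equation forces `γ¹₁₂ = 0` and the first becomes
trivial; otherwise both equations can be solved uniquely, giving case (ii).
-/

section

variable {K : Type*} [Field K] [CharZero K]

lemma second_eq_iff_of_ne_zero {γ111 γ112 γ122 γ212 : K} (h122 : γ122 ≠ 0) :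
    γ112 ^ 2 - 2 * γ112 * -γ112 + γ122 * (1 - γ111 + 2 * γ212) = 0 ↔
      γ212 = (1 / 2) * (γ111 - 1 - 3 * γ112 ^ 2 / γ122) := by
  constructor
  · intro h
    field_simp
    linear_combination h
  · rintro rfl
    field_simp
    ring

lemma first_eq_iff_of_ne_zero {γ111 γ112 γ122 γ211 : K} (h122 : γ122 ≠ 0) :
    2 * γ112 * ((1 / 2) * (γ111 - 1 - 3 * γ112 ^ 2 / γ122)) - 3 * γ211 * γ122 +
        (2 + γ111) * -γ112 = 0 ↔
      γ211 = -(γ112 ^ 3 / γ122 ^ 2) - γ112 / γ122 := by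
  constructor
  · intro h
    field_simp at h ⊢
    linear_combination (-1 / 3) * h
  · rintro rfl
    field_simp
    ring

lemma eq_zero_of_second_eq_of_eq_zero {γ111 γ112 γ212 : K}
    (h : γ112 ^ 2 - 2 * γ112 * -γ112 + 0 * (1 - γ111 + 2 * γ212) = 0) : γ112 = 0 := by
  have h3 : (3 : K) * γ112 ^ 2 = 0 := by linear_combination h
  simpa using h3

end

/-- Characterization of projectively flat Type B homogeneous connections
with symmetric Ricci tensor: with `γ¹_{12} = −γ²_{22}`, the two polynomial equations
expressing symmetry of the covariant derivative of the Ricci tensor hold if and only if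
either (i) `γ¹_{12} = 0` and `γ¹_{22} = 0`, or (ii) `γ¹_{22} ≠ 0`,
`γ²_{12} = ½(γ¹_{11} − 1 − 3(γ¹_{12})²/γ¹_{22})` and
`γ²_{11} = −(γ¹_{12})³/(γ¹_{22})² − γ¹_{12}/γ¹_{22}`. -/
theorem stmt9 (γ111 γ112 γ122 γ211 γ212 γ222 : ℝ) (hsym : γ112 = -γ222) :
    (2 * γ112 * γ212 - 3 * γ211 * γ122 + (2 + γ111) * γ222 = 0 ∧
     γ112 ^ 2 - 2 * γ112 * γ222 + γ122 * (1 - γ111 + 2 * γ212) = 0)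
      ↔ ((γ112 = 0 ∧ γ122 = 0) ∨
         (γ122 ≠ 0 ∧ γ212 = (1 / 2) * (γ111 - 1 - 3 * γ112 ^ 2 / γ122) ∧
           γ211 = -(γ112 ^ 3 / γ122 ^ 2) - γ112 / γ122)) := by
  obtain rfl : γ222 = -γ112 := by linear_combination hsym
  rcases eq_or_ne γ122 0 with rfl | h122
  · constructor
    · rintro ⟨-, h2⟩
      exact Or.inl ⟨eq_zero_of_second_eq_of_eq_zero h2, rfl⟩
    · rintro (⟨rfl, -⟩ | ⟨h, -⟩)
      · constructor <;> ring
      · exact absurd rfl h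
  · rw [second_eq_iff_of_ne_zero h122]
    constructor
    · rintro ⟨h1, h2⟩
      subst h2
      exact Or.inr ⟨h122, rfl, (first_eq_iff_of_ne_zero h122).1 h1⟩
    · rintro (⟨-, h⟩ | ⟨-, rfl, h211⟩)
      · exact absurd h h122
      · exact ⟨(first_eq_iff_of_ne_zero h122).2 h211, rfl⟩
end

section
/- Let p, m, q ∈ ℝ and let D be the connection on U = {(x¹,x²) ∈ ℝ² : x¹ > 0} whose only possibly nonzero Christoffel symbols are Γ¹_{11} = p/x¹, Γ²_{11} = m/x¹ and Γ²_{12} = Γ²_{21} = q/x¹ (a Type B connection of class (i)). Then the Ricci tensor of D is symmetric with only possibly nonzero component ρ_{11}(x¹,x²) = q(1 + p − q)/(x¹)², and it is recurrent with recurrence one-form ω = −(2/x¹)(1 + p) dx¹: for all i, j ∈ {1,2}, (D_{∂_1}ρ)_{ij} = −(2/x¹)(1 + p) ρ_{ij} and (D_{∂_2}ρ)_{ij} = 0, where (D_{∂_k}ρ)_{ij} = ∂_k ρ_{ij} − Σ_l Γ^l_{ki} ρ_{lj} − Σ_l Γ^l_{kj} ρ_{il}. -/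
/-! For a Type B connection every Christoffel symbol is a constant multiple of `1/x¹`. Since
`∂_k (c / (x¹)ⁿ) = -δ_{k1} n c / (x¹)ⁿ⁺¹`, the Ricci tensor is a constant tensor divided by
`(x¹)²` and its covariant derivative a constant tensor divided by `(x¹)³`, both given by
polynomial formulas in the constants. For class (i) these reduce to `ρ = q(1+p−q) dx¹ ⊗ dx¹`
and to `Dρ = -2(1+p) dx¹ ⊗ ρ`. -/

noncomputable section

/-- The covariant derivative of the Ricci tensor:
`(D_{∂_i}ρ)_{jk} = ∂_i ρ_{jk} − Σ_l Γ^l_{ij} ρ_{lk} − Σ_l Γ^l_{ik} ρ_{jl}`. -/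
def covRicciD (Γ : Fin 2 → Fin 2 → Fin 2 → Pt2 → ℝ) (i j k : Fin 2) (p : Pt2) : ℝ :=
  pd2 i (fun q => ricciD Γ j k q) p - (∑ l : Fin 2, Γ l i j p * ricciD Γ l k p)
    - ∑ l : Fin 2, Γ l i k p * ricciD Γ j l p

/-- The Type B class (i) connection with `Γ¹_{11} = p/x¹`, `Γ²_{11} = m/x¹`,
`Γ²_{12} = Γ²_{21} = q/x¹` and all other Christoffel symbols zero. -/
def ΓB1 (P m q : ℝ) : Fin 2 → Fin 2 → Fin 2 → Pt2 → ℝ := fun k i j x =>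
  if k = 0 ∧ i = 0 ∧ j = 0 then P / x 0
  else if k = 1 ∧ i = 0 ∧ j = 0 then m / x 0
  else if k = 1 ∧ ((i = 0 ∧ j = 1) ∨ (i = 1 ∧ j = 0)) then q / x 0
  else 0

open Topology

lemma pd2_comp_apply_zero {g : ℝ → ℝ} {g' : ℝ} (k : Fin 2) {x : Pt2}
    (hg : HasDerivAt g g' (x 0)) :
    pd2 k (fun y => g (y 0)) x = if k = 0 then g' else 0 := by
  have h : HasFDerivAt (fun y : Pt2 => g (y 0)) (g' • ContinuousLinearMap.proj (0 : Fin 2)) x :=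
    (hg.comp_hasFDerivAt x (hasFDerivAt_apply (𝕜 := ℝ) (0 : Fin 2) x) :)
  rw [pd2, h.fderiv]
  fin_cases k <;> simp

lemma pd2_div_pow (c : ℝ) (n : ℕ) (k : Fin 2) {x : Pt2} (hx : x 0 ≠ 0) :
    pd2 k (fun y => c / y 0 ^ n) x = if k = 0 then -(n * c) / x 0 ^ (n + 1) else 0 := by
  have hg : HasDerivAt (fun t : ℝ => c / t ^ n) _ (x 0) :=
    (hasDerivAt_const (x 0) c).div (hasDerivAt_pow n (x 0)) (pow_ne_zero n hx)
  rw [pd2_comp_apply_zero k hg]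
  congr 1
  rcases n with _ | n
  · simp
  · rw [Nat.add_sub_cancel]
    field_simp
    ring

-- `A k i j` is the constant in `Γ^k_{ij} = A^k_{ij} / x¹`; index `0` is the paper's `x¹`.
def typeB (A : Fin 2 → Fin 2 → Fin 2 → ℝ) : Fin 2 → Fin 2 → Fin 2 → Pt2 → ℝ :=
  fun k i j x => A k i j / x 0

def ricciCoeff (A : Fin 2 → Fin 2 → Fin 2 → ℝ) (i j : Fin 2) : ℝ :=
  -A 0 i j + (if i = 0 then ∑ k, A k k j else 0)
    + ∑ k, ∑ l, (A k k l * A l i j - A k i l * A l k j)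

lemma ricciD_typeB (A : Fin 2 → Fin 2 → Fin 2 → ℝ) (i j : Fin 2) {x : Pt2} (hx : x 0 ≠ 0) :
    ricciD (typeB A) i j x = ricciCoeff A i j / x 0 ^ 2 := by
  have htrace : (fun y : Pt2 => ∑ k, typeB A k k j y) = fun y => (∑ k, A k k j) / y 0 ^ 1 := by
    simp only [typeB, pow_one, Finset.sum_div]
  have hderiv (k : Fin 2) :
      pd2 k (typeB A k i j) x = if k = 0 then -A k i j / x 0 ^ 2 else 0 := by
    have h := pd2_div_pow (A k i j) 1 k hx
    norm_num at h
    exact h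
  rw [ricciD, htrace, pd2_div_pow _ _ _ hx]
  simp only [hderiv, Finset.sum_ite_eq', Finset.mem_univ, if_true, ricciCoeff, typeB,
    Fin.sum_univ_two]
  split_ifs <;> field_simp <;> ring

def covRicciCoeff (A : Fin 2 → Fin 2 → Fin 2 → ℝ) (k i j : Fin 2) : ℝ :=
  -(if k = 0 then 2 * ricciCoeff A i j else 0)
    - ∑ l, A l k i * ricciCoeff A l j - ∑ l, A l k j * ricciCoeff A i l

lemma covRicciD_typeB (A : Fin 2 → Fin 2 → Fin 2 → ℝ) (k i j : Fin 2) {x : Pt2}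
    (hx : x 0 ≠ 0) : covRicciD (typeB A) k i j x = covRicciCoeff A k i j / x 0 ^ 3 := by
  have hloc : (fun y => ricciD (typeB A) i j y) =ᶠ[𝓝 x] fun y => ricciCoeff A i j / y 0 ^ 2 := by
    filter_upwards [(isOpen_ne_fun (continuous_apply 0) continuous_const).mem_nhds hx]
      with y hy using ricciD_typeB A i j hy
  have hderiv : pd2 k (fun y => ricciD (typeB A) i j y) x
      = pd2 k (fun y => ricciCoeff A i j / y 0 ^ 2) x := by
    rw [pd2, hloc.fderiv_eq, pd2]
  rw [covRicciD, hderiv, pd2_div_pow _ _ _ hx]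
  simp only [ricciD_typeB A _ _ hx, covRicciCoeff, typeB, Fin.sum_univ_two]
  split_ifs <;> field_simp <;> ring

def coeffB1 (P m q : ℝ) : Fin 2 → Fin 2 → Fin 2 → ℝ :=
  ![![![P, 0], ![0, 0]], ![![m, q], ![q, 0]]]

lemma ΓB1_eq_typeB (P m q : ℝ) : ΓB1 P m q = typeB (coeffB1 P m q) := by
  funext k i j x
  fin_cases k <;> fin_cases i <;> fin_cases j <;> simp [ΓB1, typeB, coeffB1]

lemma ricciCoeff_coeffB1 (P m q : ℝ) (i j : Fin 2) :
    ricciCoeff (coeffB1 P m q) i j = if i = 0 ∧ j = 0 then q * (1 + P - q) else 0 := by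
  fin_cases i <;> fin_cases j <;> simp [ricciCoeff, coeffB1, Fin.sum_univ_two]
  ring

lemma covRicciCoeff_coeffB1 (P m q : ℝ) (k i j : Fin 2) :
    covRicciCoeff (coeffB1 P m q) k i j
      = -(if k = 0 then 2 * (1 + P) else 0) * ricciCoeff (coeffB1 P m q) i j := by
  simp only [covRicciCoeff, ricciCoeff_coeffB1, Fin.sum_univ_two]
  fin_cases k <;> fin_cases i <;> fin_cases j <;> simp [coeffB1]
  ring

/-- The Ricci tensor of the Type B class (i) connection is symmetric with
only possibly nonzero component `ρ_{11} = q(1+p−q)/(x¹)²`, and it is recurrent with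
recurrence one-form `ω = −(2/x¹)(1+p) dx¹`. -/
theorem stmt10 (P m q : ℝ) :
    ∀ x : Pt2, 0 < x 0 →
      (ricciD (ΓB1 P m q) 0 0 x = q * (1 + P - q) / (x 0) ^ 2) ∧
      (∀ i j : Fin 2, ¬(i = 0 ∧ j = 0) → ricciD (ΓB1 P m q) i j x = 0) ∧
      (∀ i j : Fin 2, covRicciD (ΓB1 P m q) 0 i j x
          = -(2 / x 0) * (1 + P) * ricciD (ΓB1 P m q) i j x) ∧
      (∀ i j : Fin 2, covRicciD (ΓB1 P m q) 1 i j x = 0) := by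
  intro x hx
  have hx0 : x 0 ≠ 0 := hx.ne'
  simp only [ΓB1_eq_typeB, ricciD_typeB _ _ _ hx0, covRicciD_typeB _ _ _ _ hx0,
    covRicciCoeff_coeffB1, ↓reduceIte]
  refine ⟨by simp [ricciCoeff_coeffB1], fun i j hij => by simp [ricciCoeff_coeffB1, hij],
    fun i j => ?_, fun i j => by simp⟩
  field_simp

end
end
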